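/- Let G be a subgroup of the alternating group A₇ on {1,...,7} that acts transitively on the 7 points and contains a subgroup isomorphic to the alternating group A₅. Then G = A₇. -/

import Mathlib

/-!
Transitivity gives `7 ∣ |G|` and the copy of `A₅` gives `60 ∣ |G|`, so `G` has index at most `6`
in `A₇`. Being simple, `A₇` acts faithfully on the cosets of a proper subgroup of index `k`,
so `|A₇| ∣ k!`, which is impossible for `k < 7`.
-/

open Nat

theorem Subgroup.index_normalCore_dvd_factorial {G : Type*} [Group G] (H : Subgroup G)
    [H.FiniteIndex] : H.normalCore.index ∣ H.index ! := by
  rw [normalCore_eq_ker, index_ker, index_eq_card, ← Nat.card_perm]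
  exact Subgroup.card_subgroup_dvd_card _

theorem IsSimpleGroup.card_dvd_index_factorial {G : Type*} [Group G] [Finite G] [IsSimpleGroup G]
    {H : Subgroup G} (hH : H ≠ ⊤) : Nat.card G ∣ H.index ! := by
  have hcore : H.normalCore = ⊥ :=
    H.normalCore_normal.eq_bot_or_eq_top.resolve_right fun h ↦
      hH (top_le_iff.mp (h ▸ H.normalCore_le))
  simpa [hcore] using H.index_normalCore_dvd_factorial

theorem MulAction.card_dvd_card_of_isPretransitive (G X : Type*) [Group G] [MulAction G X]
    [IsPretransitive G X] [Nonempty X] : Nat.card X ∣ Nat.card G := by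
  obtain ⟨x⟩ := ‹Nonempty X›
  exact index_stabilizer_of_transitive G x ▸ (stabilizer G x).index_dvd_card

theorem alternatingGroup.eq_top_of_index_lt {α : Type*} [Fintype α] [DecidableEq α]
    (hα : 5 ≤ Nat.card α) {K : Subgroup (alternatingGroup α)} (hK : K.index < Nat.card α) :
    K = ⊤ := by
  have := alternatingGroup.isSimpleGroup hα
  have : Nontrivial α := Finite.one_lt_card_iff_nontrivial.mp (by omega)
  by_contra hne
  have hle : Nat.card (alternatingGroup α) ≤ (Nat.card α - 1)! :=
    (Nat.le_of_dvd (factorial_pos _) (IsSimpleGroup.card_dvd_index_factorial hne)).trans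
      (factorial_le (by omega))
  have hperm := two_mul_nat_card_alternatingGroup (α := α)
  rw [Nat.card_perm, ← Nat.mul_factorial_pred (by omega)] at hperm
  nlinarith [factorial_pos (Nat.card α - 1)]

theorem stmt10 (G : Subgroup (Equiv.Perm (Fin 7)))
    (hle : G ≤ alternatingGroup (Fin 7))
    (htrans : ∀ x y : Fin 7, ∃ g ∈ G, g x = y)
    (hA5 : ∃ H : Subgroup (Equiv.Perm (Fin 7)), H ≤ G ∧
      Nonempty (H ≃* alternatingGroup (Fin 5))) :
    G = alternatingGroup (Fin 7) := by
  have : MulAction.IsPretransitive G (Fin 7) :=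
    ⟨fun x y ↦ let ⟨g, hg, hgx⟩ := htrans x y; ⟨⟨g, hg⟩, hgx⟩⟩
  have h7 : 7 ∣ Nat.card G := by
    simpa using MulAction.card_dvd_card_of_isPretransitive G (Fin 7)
  have h60 : 60 ∣ Nat.card G := by
    obtain ⟨H, hHG, ⟨e⟩⟩ := hA5
    have hH : Nat.card H = 60 := by
      rw [Nat.card_congr e.toEquiv, nat_card_alternatingGroup, Nat.card_fin]; rfl
    exact hH ▸ Subgroup.card_dvd_of_le hHG
  set K := G.subgroupOf (alternatingGroup (Fin 7))
  have hK : 420 ≤ Nat.card K := by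
    rw [Nat.card_congr (Subgroup.subgroupOfEquivOfLe hle).toEquiv]
    exact Nat.le_of_dvd Nat.card_pos (Nat.Coprime.mul_dvd_of_dvd_of_dvd (by norm_num) h7 h60)
  have hindex : K.index < Nat.card (Fin 7) := by
    have hA7 : Nat.card (alternatingGroup (Fin 7)) = 2520 := by
      rw [nat_card_alternatingGroup, Nat.card_fin]; rfl
    rw [Nat.card_fin]
    nlinarith [K.card_mul_index]
  exact le_antisymm hle <| Subgroup.subgroupOf_eq_top.mp <|
    alternatingGroup.eq_top_of_index_lt (by simp) hindex
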